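/- Fix n ≥ 1 and j ∈ ℤ with |j| ≤ n and n ≡ j (mod 2), and let m = C(n,(n+j)/2) ≥ 2 be the number of paths ξ ∈ Ω_n with ξ_1+…+ξ_n = j. Then the multiset of eigenvalues (with multiplicity) of the m×m matrix D_{A_P^{(n,j)}}, i.e. the submatrix of the decoherence matrix indexed by the paths with sum j, is {p_L^{(n)}(j), p_R^{(n)}(j)} together with 0 with multiplicity m−2. -/

import Mathlib

open Matrix Filter
open scoped BigOperators Classical

noncomputable section

/-- Index in `Fin 2` of a direction: `false` ↔ `-1` (index `0`), `true` ↔ `1` (index `1`). -/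
def bidx (b : Bool) : Fin 2 := if b then 1 else 0

/-- The standard basis vector `e_j`, `j ∈ {-1,1}`, of `ℂ²`. -/
def eVec (b : Bool) : Fin 2 → ℂ := fun i => if i = bidx b then 1 else 0

/-- The projection `e_j e_j†`. -/
def projC (b : Bool) : Matrix (Fin 2) (Fin 2) ℂ :=
  Matrix.single (bidx b) (bidx b) 1

/-- `P_j = e_j e_j† U`. -/
def pMat (U : Matrix (Fin 2) (Fin 2) ℂ) (b : Bool) : Matrix (Fin 2) (Fin 2) ℂ :=
  projC b * U

/-- The weight of a path `ξ = (ξ_n, …, ξ_1)` (here `ξ i` is step `i+1`):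
`w(ξ) = P_{ξ_n} ⋯ P_{ξ_1} φ₀`. -/
def weight (U : Matrix (Fin 2) (Fin 2) ℂ) (φ₀ : Fin 2 → ℂ) {n : ℕ} (ξ : Fin n → Bool) :
    Fin 2 → ℂ :=
  ((List.ofFn fun i => pMat U (ξ i)).reverse.prod).mulVec φ₀

/-- The complex inner product `⟨v, w⟩`, conjugate-linear in the first slot. -/
def cdot (v w : Fin 2 → ℂ) : ℂ := ∑ i, (starRingEnd ℂ) (v i) * w i

/-- The decoherence matrix restricted to a set `A` of pairs of paths. -/
def decMat (U : Matrix (Fin 2) (Fin 2) ℂ) (φ₀ : Fin 2 → ℂ) {n : ℕ}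
    (A : Set ((Fin n → Bool) × (Fin n → Bool))) :
    Matrix (Fin n → Bool) (Fin n → Bool) ℂ :=
  Matrix.of fun ξ η =>
    if (ξ, η) ∈ A then cdot (weight U φ₀ ξ) (weight U φ₀ η) else 0

/-- `ξ_1 + ⋯ + ξ_n ∈ ℤ`, each step being `±1`. -/
def pathSum {n : ℕ} (ξ : Fin n → Bool) : ℤ := ∑ i, (if ξ i then 1 else -1)

/-- `A₀^{(n)}`: pairs of paths with the same final direction (paths have length `n+1`). -/
def A0 (n : ℕ) : Set ((Fin (n+1) → Bool) × (Fin (n+1) → Bool)) :=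
  {x | x.1 (Fin.last n) = x.2 (Fin.last n)}

/-- `A_P^{(n)}`: pairs of paths with the same final direction and the same endpoint. -/
def AP (n : ℕ) : Set ((Fin (n+1) → Bool) × (Fin (n+1) → Bool)) :=
  {x | x.1 (Fin.last n) = x.2 (Fin.last n) ∧ pathSum x.1 = pathSum x.2}

/-- `A₁^{(n)}`: the diagonal pairs. -/
def A1 (n : ℕ) : Set ((Fin (n+1) → Bool) × (Fin (n+1) → Bool)) :=
  {x | x.1 = x.2}

/-- The von Neumann entropy `S(D) = −Σᵢ λᵢ log₂ λᵢ`, summing over the eigenvalues with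
multiplicity (the roots of the characteristic polynomial; they are real for a PSD Hermitian
matrix), with the convention `0 · log₂ 0 = 0`. -/
def vnEntropy {I : Type*} [Fintype I] [DecidableEq I] (D : Matrix I I ℂ) : ℝ :=
  -((D.charpoly.roots).map fun lam => lam.re * Real.logb 2 lam.re).sum

/-- The real projection `e_j e_j†`. -/
def projR (b : Bool) : Matrix (Fin 2) (Fin 2) ℝ :=
  Matrix.single (bidx b) (bidx b) 1

/-- The stochastic matrix `M = [[p, q], [q, p]]` of the correlated random walk, `q = 1 − p`. -/
def rwM (p : ℝ) : Matrix (Fin 2) (Fin 2) ℝ := !![p, 1-p; 1-p, p]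

/-- The initial vector `φ = (q₀, p₀)ᵀ` of the correlated random walk, `q₀ = 1 − p₀`. -/
def rwφ (p₀ : ℝ) : Fin 2 → ℝ := ![1 - p₀, p₀]

/-- `P̃_{ξ_n} ⋯ P̃_{ξ_2} φ_{ξ_1}`, where `P̃_j = e_j e_j† M` and `φ_j = e_j e_j† φ`. -/
def rwVec (p p₀ : ℝ) : {n : ℕ} → (Fin n → Bool) → (Fin 2 → ℝ)
  | 0, _ => rwφ p₀
  | n + 1, ξ =>
      ((List.ofFn fun i : Fin n => projR (ξ i.succ) * rwM p).reverse.prod).mulVec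
        ((projR (ξ 0)).mulVec (rwφ p₀))

/-- `p_L^{(n)}(j)`: the probability that the `(p₀,p)`-correlated random walk is at `j`
at time `n`, having arrived from the left. -/
def pL (p p₀ : ℝ) (n : ℕ) (j : ℤ) : ℝ :=
  ∑ ξ ∈ Finset.univ.filter (fun ξ : Fin n → Bool => pathSum ξ = j), rwVec p p₀ ξ 0

/-- `p_R^{(n)}(j)`: the probability that the `(p₀,p)`-correlated random walk is at `j`
at time `n`, having arrived from the right. -/
def pR (p p₀ : ℝ) (n : ℕ) (j : ℤ) : ℝ :=
  ∑ ξ ∈ Finset.univ.filter (fun ξ : Fin n → Bool => pathSum ξ = j), rwVec p p₀ ξ 1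

/-!
Every weight is supported on the coordinate of its last step, `w(ξ) = z_ξ e_{ξ_n}`, because each
`P_j` projects onto `e_j`. By unitarity `M` is the entrywise `|·|²` of `U` and `φ = |Uφ₀|²`, so
inductively `P̃_{ξ_n} ⋯ P̃_{ξ_2} φ_{ξ_1} = |z_ξ|² e_{ξ_n}`. Hence the block is the Gram matrix `BᴴB`
of the `2 × m` matrix `B` whose columns are the weights (entries of paths with different last
steps vanish anyway), while `BBᴴ = diag(p_L, p_R)`; and `χ(BᴴB) = X^{m-2} χ(BBᴴ)`.
-/

lemma bidx_injective : Function.Injective bidx := by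
  intro x y
  cases x <;> cases y <;> decide

section SingleSupport

variable {κ : Type*} [DecidableEq κ]

lemma normSq_comp_single (k : κ) (z : ℂ) :
    Complex.normSq ∘ Pi.single k z = Pi.single k (Complex.normSq z) :=
  funext <| Pi.apply_single (fun _ => Complex.normSq) (fun _ => map_zero _) k z

variable [Fintype κ]

lemma single_one_mulVec {R : Type*} [NonAssocSemiring R] (k : κ) (v : κ → R) :
    Matrix.single k k (1 : R) *ᵥ v = Pi.single k (v k) := by
  rw [single_mulVec, one_mul]
  rfl

lemma single_one_mul_mulVec {R : Type*} [Semiring R] (k : κ) (N : Matrix κ κ R) (v : κ → R) :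
    (Matrix.single k k 1 * N) *ᵥ v = Pi.single k ((N *ᵥ v) k) := by
  rw [← mulVec_mulVec, single_one_mulVec]

lemma map_normSq_mulVec_normSq_comp_single (U : Matrix κ κ ℂ) (k : κ) (z : ℂ) :
    U.map Complex.normSq *ᵥ (Complex.normSq ∘ Pi.single k z) =
      Complex.normSq ∘ (U *ᵥ Pi.single k z) := by
  ext i
  simp [normSq_comp_single, Complex.normSq_mul, mul_comm]

end SingleSupport

section Unitary

lemma star_mulVec_dotProduct_mulVec_of_mem_unitaryGroup {n α : Type*} [Fintype n]
    [DecidableEq n] [CommRing α] [StarRing α] {U : Matrix n n α} (hU : U ∈ unitaryGroup n α)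
    (v : n → α) : star (U *ᵥ v) ⬝ᵥ (U *ᵥ v) = star v ⬝ᵥ v := by
  rw [star_mulVec, dotProduct_mulVec, vecMul_vecMul, ← star_eq_conjTranspose,
    mem_unitaryGroup_iff'.mp hU, vecMul_one]

lemma sum_normSq_mulVec_of_mem_unitaryGroup {n : Type*} [Fintype n] [DecidableEq n]
    {U : Matrix n n ℂ} (hU : U ∈ unitaryGroup n ℂ) (v : n → ℂ) :
    ∑ i, Complex.normSq ((U *ᵥ v) i) = ∑ i, Complex.normSq (v i) := by
  have h := star_mulVec_dotProduct_mulVec_of_mem_unitaryGroup hU v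
  simp only [dotProduct, Pi.star_apply, Complex.star_def, ← Complex.normSq_eq_conj_mul_self] at h
  exact_mod_cast h

variable {a b c d : ℂ}

lemma normSq_entries_of_mem_unitaryGroup (hU : !![a, b; c, d] ∈ unitaryGroup (Fin 2) ℂ) :
    Complex.normSq b = 1 - Complex.normSq a ∧ Complex.normSq c = 1 - Complex.normSq a ∧
      Complex.normSq d = Complex.normSq a := by
  have col₀ := sum_normSq_mulVec_of_mem_unitaryGroup hU (Pi.single 0 1)
  have col₁ := sum_normSq_mulVec_of_mem_unitaryGroup hU (Pi.single 1 1)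
  have row₀ := sum_normSq_mulVec_of_mem_unitaryGroup (Unitary.star_mem hU) (Pi.single 0 1)
  simp [Fin.sum_univ_two] at col₀ col₁ row₀
  exact ⟨by linarith, by linarith, by linarith⟩

lemma rwM_eq_map_normSq (hU : !![a, b; c, d] ∈ unitaryGroup (Fin 2) ℂ) :
    rwM (Complex.normSq a) = !![a, b; c, d].map Complex.normSq := by
  obtain ⟨hb, hc, hd⟩ := normSq_entries_of_mem_unitaryGroup hU
  ext i k
  fin_cases i <;> fin_cases k <;> simp [rwM, hb, hc, hd]

lemma rwφ_eq_normSq_mulVec (hU : !![a, b; c, d] ∈ unitaryGroup (Fin 2) ℂ) {α β : ℂ}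
    (hφ : Complex.normSq α + Complex.normSq β = 1) :
    rwφ (Complex.normSq (c * α + d * β)) = Complex.normSq ∘ (!![a, b; c, d] *ᵥ ![α, β]) := by
  have h := sum_normSq_mulVec_of_mem_unitaryGroup hU ![α, β]
  simp [Fin.sum_univ_two, hφ] at h
  rw [show c * α + d * β = α * c + β * d by ring]
  ext i
  fin_cases i <;> simp [rwφ, ← h]

end Unitary

section Paths

variable (U : Matrix (Fin 2) (Fin 2) ℂ) (φ₀ : Fin 2 → ℂ)

lemma weight_zero (ξ : Fin 0 → Bool) : weight U φ₀ ξ = φ₀ := by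
  simp [weight]

lemma weight_succ {n : ℕ} (ξ : Fin (n + 1) → Bool) :
    weight U φ₀ ξ = pMat U (ξ (Fin.last n)) *ᵥ weight U φ₀ (Fin.init ξ) := by
  rw [weight, weight, List.ofFn_succ', List.concat_eq_append, List.reverse_append,
    List.reverse_singleton, List.singleton_append, List.prod_cons, ← mulVec_mulVec]
  rfl

lemma weight_eq_single {n : ℕ} (ξ : Fin (n + 1) → Bool) :
    weight U φ₀ ξ =
      Pi.single (bidx (ξ (Fin.last n))) (weight U φ₀ ξ (bidx (ξ (Fin.last n)))) := by
  rw [weight_succ, pMat, projC, single_one_mul_mulVec, Pi.single_eq_same]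

lemma rwVec_one (p p₀ : ℝ) (ξ : Fin 1 → Bool) : rwVec p p₀ ξ = projR (ξ 0) *ᵥ rwφ p₀ := by
  simp [rwVec]

lemma rwVec_succ (p p₀ : ℝ) {n : ℕ} (ξ : Fin (n + 2) → Bool) :
    rwVec p p₀ ξ = (projR (ξ (Fin.last (n + 1))) * rwM p) *ᵥ rwVec p p₀ (Fin.init ξ) := by
  change ((List.ofFn fun i : Fin (n + 1) => projR (ξ i.succ) * rwM p).reverse.prod) *ᵥ _ = _
  rw [List.ofFn_succ', List.concat_eq_append, List.reverse_append, List.reverse_singleton,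
    List.singleton_append, List.prod_cons, ← mulVec_mulVec, Fin.succ_last]
  rfl

lemma rwVec_eq_normSq_weight {p p₀ : ℝ} (hM : rwM p = U.map Complex.normSq)
    (hφ : rwφ p₀ = Complex.normSq ∘ (U *ᵥ φ₀)) :
    ∀ {n : ℕ} (ξ : Fin (n + 1) → Bool), rwVec p p₀ ξ = Complex.normSq ∘ weight U φ₀ ξ
  | 0, ξ => by
    rw [rwVec_one, weight_succ, weight_zero, pMat, projR, projC, single_one_mulVec,
      single_one_mul_mulVec, normSq_comp_single, hφ]
    rfl
  | n + 1, ξ => by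
    rw [rwVec_succ, weight_succ, pMat, projR, projC, single_one_mul_mulVec,
      single_one_mul_mulVec, normSq_comp_single, rwVec_eq_normSq_weight hM hφ, hM,
      weight_eq_single U φ₀ (Fin.init ξ), map_normSq_mulVec_normSq_comp_single]
    rfl

end Paths

lemma pL_pR_eq_sum (p p₀ : ℝ) (n : ℕ) (j : ℤ) :
    ![pL p p₀ n j, pR p p₀ n j] =
      fun k => ∑ ξ : {ξ : Fin n → Bool // pathSum ξ = j}, rwVec p p₀ ξ.1 k := by
  ext k
  fin_cases k <;> exact Finset.sum_subtype _ (by simp) _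

section Gram

variable {ι : Type*}

lemma cdot_single_of_ne {k l : Fin 2} (h : k ≠ l) (x y : ℂ) :
    cdot (Pi.single k x) (Pi.single l y) = 0 := by
  fin_cases k <;> fin_cases l <;> simp_all [cdot, Fin.sum_univ_two]

lemma conjTranspose_mul_self_eq_cdot (w : ι → Fin 2 → ℂ) :
    (of fun k η => w η k)ᴴ * of (fun k η => w η k) = of fun ξ η => cdot (w ξ) (w η) := by
  ext ξ η
  simp [mul_apply, cdot]

lemma mul_conjTranspose_eq_diagonal_of_single [Fintype ι] {κ : Type*} [DecidableEq κ]
    (w : ι → κ → ℂ) (ℓ : ι → κ) (hw : ∀ η, w η = Pi.single (ℓ η) (w η (ℓ η))) :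
    of (fun k η => w η k) * (of fun k η => w η k)ᴴ =
      diagonal fun k => ∑ η, (Complex.normSq (w η k) : ℂ) := by
  ext k l
  rw [mul_apply, diagonal_apply]
  split_ifs with hkl
  · subst hkl
    simp [Complex.mul_conj]
  · refine Finset.sum_eq_zero fun η _ => ?_
    rw [of_apply, conjTranspose_apply, of_apply, hw η]
    by_cases hk : k = ℓ η
    · subst hk
      simp [Ne.symm hkl]
    · simp [hk]

end Gram

open Polynomial in
lemma roots_X_pow_mul_X_sub_C_mul_X_sub_C {R : Type*} [CommRing R] [IsDomain R] (m : ℕ)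
    (x y : R) : (X ^ m * ((X - C x) * (X - C y))).roots = {x, y} + Multiset.replicate m 0 := by
  rw [roots_mul ((monic_X_pow m).mul ((monic_X_sub_C x).mul (monic_X_sub_C y))).ne_zero,
    roots_mul ((monic_X_sub_C x).mul (monic_X_sub_C y)).ne_zero, roots_X_pow, roots_X_sub_C,
    roots_X_sub_C, Multiset.nsmul_singleton, add_comm]
  rfl

theorem spec_decMat_AP_block_general
    (a b c d α β : ℂ)
    (hU : !![a, b; c, d] ∈ Matrix.unitaryGroup (Fin 2) ℂ)
    (hφ : ‖α‖ ^ 2 + ‖β‖ ^ 2 = 1)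
    (p p₀ : ℝ)
    (hp : p = ‖a‖ ^ 2) (hp₀ : p₀ = ‖c * α + d * β‖ ^ 2)
    (n : ℕ) (j : ℤ)
    (hcard2 : 2 ≤ Fintype.card {ξ : Fin (n+1) → Bool // pathSum ξ = j}) :
    (Matrix.charpoly (Matrix.of fun ξ η : {ξ : Fin (n+1) → Bool // pathSum ξ = j} =>
        if ξ.1 (Fin.last n) = η.1 (Fin.last n) then
          cdot (weight !![a, b; c, d] ![α, β] ξ.1) (weight !![a, b; c, d] ![α, β] η.1)
        else 0)).roots =
      {((pL p p₀ (n + 1) j : ℝ) : ℂ), ((pR p p₀ (n + 1) j : ℝ) : ℂ)} +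
      Multiset.replicate (Fintype.card {ξ : Fin (n+1) → Bool // pathSum ξ = j} - 2) 0 := by
  rw [Complex.sq_norm] at hp hp₀
  rw [Complex.sq_norm, Complex.sq_norm] at hφ
  set w : {ξ : Fin (n+1) → Bool // pathSum ξ = j} → Fin 2 → ℂ :=
    fun ξ => weight !![a, b; c, d] ![α, β] ξ.1
  have hw (ξ) : w ξ = Pi.single (bidx (ξ.1 (Fin.last n))) (w ξ (bidx (ξ.1 (Fin.last n)))) :=
    weight_eq_single _ _ ξ.1
  have hgram : (Matrix.of fun ξ η : {ξ : Fin (n+1) → Bool // pathSum ξ = j} =>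
      if ξ.1 (Fin.last n) = η.1 (Fin.last n) then cdot (w ξ) (w η) else 0) =
        (of fun k η => w η k)ᴴ * of fun k η => w η k := by
    rw [conjTranspose_mul_self_eq_cdot]
    ext ξ η
    rw [of_apply, of_apply]
    split_ifs with h
    · rfl
    · rw [hw ξ, hw η, cdot_single_of_ne (bidx_injective.ne h)]
  have hdiag : (of fun k η => w η k) * (of fun k η => w η k)ᴴ =
      diagonal fun k => ((![pL p p₀ (n + 1) j, pR p p₀ (n + 1) j] k : ℝ) : ℂ) := by
    rw [mul_conjTranspose_eq_diagonal_of_single w _ hw, pL_pR_eq_sum, hp, hp₀]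
    simp only [w, rwVec_eq_normSq_weight _ _ (rwM_eq_map_normSq hU) (rwφ_eq_normSq_mulVec hU hφ)]
    push_cast
    rfl
  rw [hgram, charpoly_mul_comm_of_le _ _ (by simpa using hcard2), hdiag, charpoly_diagonal,
    Fin.prod_univ_two, Fintype.card_fin]
  exact roots_X_pow_mul_X_sub_C_mul_X_sub_C _ _ _

/-- eigenvalues of the block `D_{A_P^{(n,j)}}` of the decoherence matrix indexed
by the paths (of length `n+1`) with endpoint `j`: they are `p_L^{(n+1)}(j)`, `p_R^{(n+1)}(j)`
and `0` with multiplicity `m − 2`, where `m = C(n+1, (n+1+j)/2) ≥ 2` is the number of such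
paths. -/
theorem spec_decMat_AP_block
    (a b c d α β : ℂ)
    (hU : !![a, b; c, d] ∈ Matrix.unitaryGroup (Fin 2) ℂ)
    (habcd : a * b * c * d ≠ 0)
    (hφ : ‖α‖ ^ 2 + ‖β‖ ^ 2 = 1)
    (p p₀ : ℝ)
    (hp : p = ‖a‖ ^ 2) (hp₀ : p₀ = ‖c * α + d * β‖ ^ 2)
    (n : ℕ) (j : ℤ) (hj : j.natAbs ≤ n + 1) (hpar : ((n : ℤ) + 1) % 2 = j % 2)
    (hcard : Fintype.card {ξ : Fin (n+1) → Bool // pathSum ξ = j} =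
      Nat.choose (n + 1) ((((n : ℤ) + 1 + j) / 2).toNat))
    (hcard2 : 2 ≤ Fintype.card {ξ : Fin (n+1) → Bool // pathSum ξ = j}) :
    (Matrix.charpoly (Matrix.of fun ξ η : {ξ : Fin (n+1) → Bool // pathSum ξ = j} =>
        if ξ.1 (Fin.last n) = η.1 (Fin.last n) then
          cdot (weight !![a, b; c, d] ![α, β] ξ.1) (weight !![a, b; c, d] ![α, β] η.1)
        else 0)).roots =
      {((pL p p₀ (n + 1) j : ℝ) : ℂ), ((pR p p₀ (n + 1) j : ℝ) : ℂ)} +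
      Multiset.replicate (Fintype.card {ξ : Fin (n+1) → Bool // pathSum ξ = j} - 2) 0 :=
  spec_decMat_AP_block_general a b c d α β hU hφ p p₀ hp hp₀ n j hcard2
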